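/- arXiv:2006.13441 — 4 statements merged into one kernel-verified Lean document; each statement's English description precedes it below -/
import Mathlib

section
/- Let G be an edge-colored directed graph and ∼ an (r,s,d)-preserving equivalence relation on G* satisfying (KG0) and (KG4). Then ∼ satisfies the associativity condition (KG3): for any tricolored path abc ∈ G³ with the three edge colors pairwise distinct, the two paths obtained by the two standard routes of successive pairwise swaps (Route 1: swap ab, then the new middle pair, then the new first pair; Route 2: swap bc, then the new last pair, then the new middle pair) are equal. -/
open scoped Classical

/-- A `k`-colored directed graph: vertices, edges, range, source, and a color
(degree) in `Fin k` for each edge. -/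
structure ColoredGraph (k : ℕ) where
  V : Type
  E : Type
  src : E → V
  rng : E → V
  color : E → Fin k

namespace ColoredGraph

variable {k : ℕ}

/-- A list of edges (listed from the source end) is composable starting at `v`. -/
def Composable (G : ColoredGraph k) : G.V → List G.E → Prop
  | _, [] => True
  | v, e :: l => G.src e = v ∧ Composable G (G.rng e) l

/-- The final vertex reached by following a list of edges starting at `v`. -/
def endV (G : ColoredGraph k) : G.V → List G.E → G.V
  | v, [] => v
  | _, e :: l => endV G (G.rng e) l

/-- A finite path in `G` : an element of the path category `G*`.  The edges are
listed starting from the source (so the first edge of the list is the first,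
innermost, edge of the path). -/
structure GPath (G : ColoredGraph k) where
  src : G.V
  edges : List G.E
  comp : G.Composable src edges

namespace GPath

variable {G : ColoredGraph k}

/-- The range of a path. -/
def rng (p : GPath G) : G.V := G.endV p.src p.edges

/-- The color order of a path: the list of colors of its edges, starting from
the source end. -/
def colors (p : GPath G) : List (Fin k) := p.edges.map G.color

/-- The degree of a path, as an element of `ℕ^k`. -/
def deg (p : GPath G) : Fin k → ℕ := fun i => p.colors.count i

end GPath

theorem composable_append {G : ColoredGraph k} :
    ∀ (l₁ : List G.E) (v : G.V) (l₂ : List G.E),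
      G.Composable v l₁ → G.Composable (G.endV v l₁) l₂ → G.Composable v (l₁ ++ l₂) := by
  intro l₁
  induction l₁ with
  | nil => intro v l₂ _ h₂; exact h₂
  | cons e l ih => intro v l₂ h₁ h₂; exact ⟨h₁.1, ih (G.rng e) l₂ h₁.2 h₂⟩

theorem endV_append {G : ColoredGraph k} :
    ∀ (l₁ : List G.E) (v : G.V) (l₂ : List G.E),
      G.endV v (l₁ ++ l₂) = G.endV (G.endV v l₁) l₂ := by
  intro l₁
  induction l₁ with
  | nil => intro v l₂; rfl
  | cons e l ih => intro v l₂; exact ih (G.rng e) l₂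

/-- Concatenation of composable paths. -/
def GPath.append {G : ColoredGraph k} (p q : GPath G) (h : p.rng = q.src) : GPath G :=
  ⟨p.src, p.edges ++ q.edges,
    composable_append p.edges p.src q.edges p.comp
      (by rw [show G.endV p.src p.edges = q.src from h]; exact q.comp)⟩

/-- The path consisting of a single edge. -/
def edgePath (G : ColoredGraph k) (e : G.E) : GPath G :=
  ⟨G.src e, [e], by exact ⟨rfl, True.intro⟩⟩

/-- The relation preserves range, source and degree. -/
def PreservesRSD (G : ColoredGraph k) (rel : GPath G → GPath G → Prop) : Prop :=
  ∀ p q : GPath G, rel p q → p.src = q.src ∧ p.rng = q.rng ∧ p.deg = q.deg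

/-- (KG0): the relation respects concatenation of paths. -/
def KG0 (G : ColoredGraph k) (rel : GPath G → GPath G → Prop) : Prop :=
  ∀ (p₁ p₂ q₁ q₂ : GPath G) (h : p₁.rng = p₂.src) (h' : q₁.rng = q₂.src),
    rel p₁ q₁ → rel p₂ q₂ → rel (p₁.append p₂ h) (q₁.append q₂ h')

/-- (KG4): for each path and each permutation of its color order there is a
unique equivalent path with the permuted color order. -/
def KG4 (G : ColoredGraph k) (rel : GPath G → GPath G → Prop) : Prop :=
  ∀ (p : GPath G) (c : List (Fin k)), List.Perm c p.colors →
    ∃! q : GPath G, rel q p ∧ q.colors = c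

/-- (KG1): distinct edges are inequivalent. -/
def KG1 (G : ColoredGraph k) (rel : GPath G → GPath G → Prop) : Prop :=
  ∀ e f : G.E, rel (edgePath G e) (edgePath G f) ↔ e = f

/-- (KG2): completeness for bi-colored paths. -/
def KG2 (G : ColoredGraph k) (rel : GPath G → GPath G → Prop) : Prop :=
  ∀ (p : GPath G) (i j : Fin k), p.colors = [i, j] →
    ∃! q : GPath G, rel p q ∧ q.colors = [j, i]

/-- An equivalence relation, together with `KG0` and `KG4`, presents a `k`-graph. -/
def IsKGraphRel (G : ColoredGraph k) (rel : GPath G → GPath G → Prop) : Prop :=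
  Equivalence rel ∧ PreservesRSD G rel ∧ KG0 G rel ∧ KG4 G rel

/-- Every vertex receives an edge of every color. -/
def SourceFree (G : ColoredGraph k) : Prop :=
  ∀ (v : G.V) (i : Fin k), ∃ e : G.E, G.rng e = v ∧ G.color e = i

/-- Every vertex receives finitely many edges of each color. -/
def RowFinite (G : ColoredGraph k) : Prop :=
  ∀ (v : G.V) (i : Fin k), Set.Finite {e : G.E | G.rng e = v ∧ G.color e = i}

/-- `q` is obtained from `p` by replacing the initial (inner) two-edge subpath by
an equivalent two-edge path with transposed colors. -/
def SwapInner (G : ColoredGraph k) (rel : GPath G → GPath G → Prop) (p q : GPath G) : Prop :=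
  ∃ (a b w : GPath G) (ha : a.rng = w.src) (hb : b.rng = w.src),
    a.edges.length = 2 ∧ b.colors = a.colors.reverse ∧ rel a b ∧
    p = a.append w ha ∧ q = b.append w hb

/-- `q` is obtained from `p` by replacing the final (outer) two-edge subpath by
an equivalent two-edge path with transposed colors. -/
def SwapOuter (G : ColoredGraph k) (rel : GPath G → GPath G → Prop) (p q : GPath G) : Prop :=
  ∃ (w a b : GPath G) (ha : w.rng = a.src) (hb : w.rng = b.src),
    a.edges.length = 2 ∧ b.colors = a.colors.reverse ∧ rel a b ∧
    p = w.append a ha ∧ q = w.append b hb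

/-- (KG3): associativity. For a tri-colored path with pairwise distinct colors,
the two standard routes of successive pairwise swaps give the same result. -/
def KG3 (G : ColoredGraph k) (rel : GPath G → GPath G → Prop) : Prop :=
  ∀ (p : GPath G) (i j l : Fin k), i ≠ j → j ≠ l → i ≠ l →
    p.colors = [l, j, i] → ∀ p₁ p₂ p₃ q₁ q₂ q₃ : GPath G,
      SwapOuter G rel p p₁ → SwapInner G rel p₁ p₂ → SwapOuter G rel p₂ p₃ →
      SwapInner G rel p q₁ → SwapOuter G rel q₁ q₂ → SwapInner G rel q₂ q₃ → p₃ = q₃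

/-- `w ≤ v` : there is a path from `v` to `w` (source `v`, range `w`). -/
def LeV (G : ColoredGraph k) (v w : G.V) : Prop :=
  ∃ p : GPath G, p.src = v ∧ p.rng = w

theorem LeV_extend {G : ColoredGraph k} {v : G.V} (e : G.E)
    (h : LeV G v (G.src e)) : LeV G v (G.rng e) := by
  obtain ⟨p, hs, hr⟩ := h
  refine ⟨p.append (edgePath G e) hr, hs, ?_⟩
  show G.endV p.src (p.edges ++ [e]) = G.rng e
  exact (endV_append p.edges p.src [e]).trans rfl

/-- A complete edge from `u` to `w`: exactly one edge of each color, all with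
source `u` and range `w`, closed under commuting squares. -/
def IsCompleteEdge (G : ColoredGraph k) (rel : GPath G → GPath G → Prop)
    (E : Set G.E) (u w : G.V) : Prop :=
  (∀ i : Fin k, ∃! e : G.E, e ∈ E ∧ G.color e = i) ∧
  (∀ e ∈ E, G.src e = u ∧ G.rng e = w) ∧
  (∀ e ∈ E, ∀ a b f' : G.E, ∀ p q : GPath G,
    ((p.edges = [a, e] ∧ q.edges = [b, f']) ∨ (p.edges = [e, a] ∧ q.edges = [f', b])) →
    rel p q → f' ∈ E)

/-- A set `T` of edges of the color of `f` is closed under being opposite to a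
member in a commuting square whose other color differs from that of `f`. -/
def SqClosed (G : ColoredGraph k) (rel : GPath G → GPath G → Prop)
    (f : G.E) (T : Set G.E) : Prop :=
  ∀ g ∈ T, ∀ (e a b : G.E) (p q : GPath G),
    G.color a = G.color b → G.color a ≠ G.color f → G.color e = G.color f →
    ((p.edges = [g, a] ∧ q.edges = [b, e]) ∨ (p.edges = [a, g] ∧ q.edges = [e, b])) →
    rel p q → e ∈ T

theorem aux_colors_append {k : ℕ} {G : ColoredGraph k} (p q : GPath G) (h : p.rng = q.src) :
    (p.append q h).colors = p.colors ++ q.colors := by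
  simp [GPath.colors, GPath.append]

theorem aux_swapOuter_step {k : ℕ} {G : ColoredGraph k} {rel : GPath G → GPath G → Prop}
    (heq : Equivalence rel) (h0 : KG0 G rel) {P Q : GPath G}
    (h : SwapOuter G rel P Q) {x y z : Fin k} (hP : P.colors = [x, y, z]) :
    rel Q P ∧ Q.colors = [x, z, y] := by
  obtain ⟨w, a, b, ha, hb, hlen, hbc, hab, hPe, hQe⟩ := h
  have hac : a.colors.length = 2 := by simp [GPath.colors, hlen]
  obtain ⟨c₁, c₂, hcc⟩ := List.length_eq_two.mp hac
  have hPc : w.colors ++ a.colors = [x, y, z] := by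
    rw [← aux_colors_append w a ha, ← hPe]; exact hP
  have hw : w.colors.length = 1 := by
    have := congrArg List.length hPc
    simp [hcc] at this
    omega
  obtain ⟨c₀, hc0⟩ := List.length_eq_one_iff.mp hw
  rw [hc0, hcc] at hPc
  simp at hPc
  obtain ⟨h0', h1', h2'⟩ := hPc
  constructor
  · rw [hQe, hPe]
    exact h0 w b w a hb ha (heq.refl w) (heq.symm hab)
  · rw [hQe, aux_colors_append w b hb, hc0, hbc, hcc]
    simp [h0', h1', h2']

theorem aux_swapInner_step {k : ℕ} {G : ColoredGraph k} {rel : GPath G → GPath G → Prop}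
    (heq : Equivalence rel) (h0 : KG0 G rel) {P Q : GPath G}
    (h : SwapInner G rel P Q) {x y z : Fin k} (hP : P.colors = [x, y, z]) :
    rel Q P ∧ Q.colors = [y, x, z] := by
  obtain ⟨a, b, w, ha, hb, hlen, hbc, hab, hPe, hQe⟩ := h
  have hac : a.colors.length = 2 := by simp [GPath.colors, hlen]
  obtain ⟨c₀, c₁, hcc⟩ := List.length_eq_two.mp hac
  have hPc : a.colors ++ w.colors = [x, y, z] := by
    rw [← aux_colors_append a w ha, ← hPe]; exact hP
  rw [hcc] at hPc
  simp at hPc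
  obtain ⟨h0', h1', h2'⟩ := hPc
  constructor
  · rw [hQe, hPe]
    exact h0 b w a w hb ha (heq.symm hab) (heq.refl w)
  · rw [hQe, aux_colors_append b w hb, hbc, hcc]
    simp [h0', h1', h2']

/-- (KG0) and (KG4) imply (KG3): for a tri-colored path `p` (colors, from the
source end, `l`, `j`, `i`, pairwise distinct), the two standard routes of
successive pairwise swaps (Route 1: outer, inner, outer; Route 2: inner, outer,
inner) produce the same path. -/
theorem kg3_of_kg0_kg4 {k : ℕ} (G : ColoredGraph k) (rel : GPath G → GPath G → Prop)
    (heq : Equivalence rel) (hrsd : PreservesRSD G rel)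
    (h0 : KG0 G rel) (h4 : KG4 G rel)
    (p : GPath G) (i j l : Fin k) (hij : i ≠ j) (hjl : j ≠ l) (hil : i ≠ l)
    (hc : p.colors = [l, j, i])
    (p₁ p₂ p₃ q₁ q₂ q₃ : GPath G)
    (r1 : SwapOuter G rel p p₁) (r2 : SwapInner G rel p₁ p₂) (r3 : SwapOuter G rel p₂ p₃)
    (s1 : SwapInner G rel p q₁) (s2 : SwapOuter G rel q₁ q₂) (s3 : SwapInner G rel q₂ q₃) :
    p₃ = q₃ := by
  obtain ⟨hr1, hc1⟩ := aux_swapOuter_step heq h0 r1 hc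
  obtain ⟨hr2, hc2⟩ := aux_swapInner_step heq h0 r2 hc1
  obtain ⟨hr3, hc3⟩ := aux_swapOuter_step heq h0 r3 hc2
  obtain ⟨hs1, hd1⟩ := aux_swapInner_step heq h0 s1 hc
  obtain ⟨hs2, hd2⟩ := aux_swapOuter_step heq h0 s2 hd1
  obtain ⟨hs3, hd3⟩ := aux_swapInner_step heq h0 s3 hd2
  have hperm : List.Perm [i, j, l] p.colors := by
    rw [hc]
    simpa using List.reverse_perm [l, j, i]
  obtain ⟨u, _, huniq⟩ := h4 p [i, j, l] hperm
  have e1 : p₃ = u := huniq p₃ ⟨heq.trans hr3 (heq.trans hr2 hr1), hc3⟩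
  have e2 : q₃ = u := huniq q₃ ⟨heq.trans hs3 (heq.trans hs2 hs1), hd3⟩
  rw [e1, e2]

end ColoredGraph
end

section
/- Let (Λ, d) be a source-free k-graph, v ∈ Λ⁰ a vertex, and ℰ₁ ∪ ℰ₂ a partition of the set of edges with range v satisfying the pairing condition: whenever a, f are edges with range v and there exist edges g, b with ag ∼ fb, then a and f lie in the same part. Then for each j ∈ {1,2} and each color 1 ≤ i ≤ k, the set ℰ_j contains an edge of degree e_i. -/
open scoped Classical

namespace ColoredGraph

variable {k : ℕ}

/-- If `E₁ ∪ E₂` is a partition of the edges with range `v` of a source-free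
`k`-graph satisfying the pairing condition, then each part contains an edge of
every color. -/
theorem pairing_parts_have_all_colors {k : ℕ} (G : ColoredGraph k)
    (rel : GPath G → GPath G → Prop)
    (hK : IsKGraphRel G rel) (hsf : SourceFree G)
    (v : G.V) (E₁ E₂ : Set G.E)
    (hsub₁ : ∀ e ∈ E₁, G.rng e = v) (hsub₂ : ∀ e ∈ E₂, G.rng e = v)
    (hcov : ∀ e : G.E, G.rng e = v → e ∈ E₁ ∪ E₂)
    (hdisj : ∀ e : G.E, ¬(e ∈ E₁ ∧ e ∈ E₂))
    (hne₁ : E₁.Nonempty) (hne₂ : E₂.Nonempty)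
    (hpair : ∀ a fe : G.E, G.rng a = v → G.rng fe = v →
      (∃ (g b : G.E) (p q : GPath G), p.edges = [g, a] ∧ q.edges = [b, fe] ∧ rel p q) →
      ((a ∈ E₁ ↔ fe ∈ E₁) ∧ (a ∈ E₂ ↔ fe ∈ E₂))) :
    ∀ i : Fin k, (∃ e ∈ E₁, G.color e = i) ∧ (∃ e ∈ E₂, G.color e = i) := by
  obtain ⟨hEq, hRSD, hKG0, hKG4⟩ := hK
  have main : ∀ (i : Fin k) (f : G.E), G.rng f = v →
      ∃ e : G.E, G.rng e = v ∧ G.color e = i ∧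
        ((e ∈ E₁ ↔ f ∈ E₁) ∧ (e ∈ E₂ ↔ f ∈ E₂)) := by
    intro i f hf
    obtain ⟨g, hg, hgc⟩ := hsf (G.src f) i
    have p : GPath G := ⟨G.src g, [g, f], ⟨rfl, hg.symm, trivial⟩⟩
    obtain ⟨q, ⟨hqrel, hqc⟩, -⟩ :=
      hKG4 ⟨G.src g, [g, f], ⟨rfl, hg.symm, trivial⟩⟩ [G.color f, G.color g]
        (List.Perm.swap _ _ _)
    set p : GPath G := ⟨G.src g, [g, f], ⟨rfl, hg.symm, trivial⟩⟩ with hp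
    obtain ⟨qs, qe, qcomp⟩ := q
    have hqc' : qe.map G.color = [G.color f, G.color g] := hqc
    have hex : ∃ a e, qe = [a, e] := by
      cases qe with
      | nil => simp at hqc'
      | cons a t =>
        cases t with
        | nil => simp at hqc'
        | cons e t2 =>
          cases t2 with
          | nil => exact ⟨a, e, rfl⟩
          | cons x t3 => simp at hqc'
    obtain ⟨a, e, rfl⟩ := hex
    have hrng : G.rng e = v := by
      have h := (hRSD ⟨qs, [a, e], qcomp⟩ p hqrel).2.1
      exact h.trans hf
    have hce : G.color e = i := by
      simp only [List.map_cons, List.map_nil, List.cons.injEq] at hqc'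
      exact hqc'.2.1.trans hgc
    refine ⟨e, hrng, hce, hpair e f hrng hf ?_⟩
    exact ⟨a, g, ⟨qs, [a, e], qcomp⟩, p, rfl, rfl, hqrel⟩
  intro i
  constructor
  · obtain ⟨f, hf⟩ := hne₁
    obtain ⟨e, _, hce, hiff, -⟩ := main i f (hsub₁ f hf)
    exact ⟨e, hiff.mpr hf, hce⟩
  · obtain ⟨f, hf⟩ := hne₂
    obtain ⟨e, _, hce, -, hiff⟩ := main i f (hsub₂ f hf)
    exact ⟨e, hiff.mpr hf, hce⟩


end ColoredGraph
end

section
/- Let (Λ, d) be a source-free k-graph, v ∈ Λ⁰, and ℰ₁ ∪ ℰ₂ a partition of r⁻¹(v) ∩ Λ¹ satisfying the pairing condition. Let G_I be the in-split colored graph (v replaced by v¹, v²; each edge f with source v replaced by f¹, f² with sources v¹, v² respectively; each edge f with range v and f ∈ ℰ_i gets range v^i), with equivalence relation λ ∼_I μ iff par(λ) ∼ par(μ), r_I(λ) = r_I(μ), and s_I(λ) = s_I(μ), where par deletes superscripts. Then Λ_I := G_I*/∼_I is a source-free k-graph. -/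
/-!
A path of the in-split graph is determined by its source and its parent path, every path of
`G` lifts from any lift of its source, and the vertex where the lift ends depends only on the
last edge of the parent path (through the part `ℰᵢ` containing it, when it ends at `v`). So
(KG4) for `∼_I` reduces to (KG4) for `∼` once `∼`-equivalent paths are known to end with
edges in the same part. By (KG4), `p ∼ q` is reached from `q` by a chain of adjacent
transpositions of colors, each replacing a two-edge subpath by an equivalent one, and for a
single such replacement this is the pairing condition. Source-freeness at `vⁱ` follows by
commuting an edge of `ℰᵢ` with an edge of the required color: the pairing condition keeps the
new last edge in `ℰᵢ`.
-/

open scoped Classical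

namespace ColoredGraph

variable {k : ℕ}

/-- Vertices of the in-split graph: the old vertices other than `v`, together
with the two copies `v¹, v²` of `v` (encoded by `Bool`). -/
abbrev IV (G : ColoredGraph k) (v : G.V) := {w : G.V // w ≠ v} ⊕ Bool

/-- Edges of the in-split graph: each edge with source `≠ v` survives, and each
edge with source `v` is duplicated into two copies (indexed by `Bool`). -/
abbrev IE (G : ColoredGraph k) (v : G.V) :=
  {e : G.E // G.src e ≠ v} ⊕ ({e : G.E // G.src e = v} × Bool)

/-- The in-split colored graph at the vertex `v` for the part `E₁` of the
partition `E₁ ∪ E₂` of `r⁻¹(v)` (an edge with range `v` gets range `v¹` if it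
lies in `E₁` and `v²` otherwise; here `v¹` is encoded as `true`). -/
noncomputable def InsplitGraph (G : ColoredGraph k) (v : G.V) (E₁ : Set G.E) :
    ColoredGraph k where
  V := IV G v
  E := IE G v
  src := fun ε => match ε with
    | Sum.inl e => Sum.inl ⟨G.src e.1, e.2⟩
    | Sum.inr (_, b) => Sum.inr b
  rng := fun ε => match ε with
    | Sum.inl e =>
        if h : G.rng e.1 = v then (if e.1 ∈ E₁ then Sum.inr true else Sum.inr false)
        else Sum.inl ⟨G.rng e.1, h⟩
    | Sum.inr (e, _) =>
        if h : G.rng e.1 = v then (if e.1 ∈ E₁ then Sum.inr true else Sum.inr false)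
        else Sum.inl ⟨G.rng e.1, h⟩
  color := fun ε => match ε with
    | Sum.inl e => G.color e.1
    | Sum.inr (e, _) => G.color e.1

/-- The parent map on vertices of the in-split graph (removes superscripts). -/
def parV (G : ColoredGraph k) (v : G.V) : IV G v → G.V
  | Sum.inl w => w.1
  | Sum.inr _ => v

/-- The parent map on edges of the in-split graph (removes superscripts). -/
def parE (G : ColoredGraph k) (v : G.V) : IE G v → G.E
  | Sum.inl e => e.1
  | Sum.inr (e, _) => e.1

/-- The equivalence relation on paths of the in-split graph:
`p ∼_I q` iff `par p ∼ par q`, and `p`, `q` have the same source and range. -/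
def InsplitRel (G : ColoredGraph k) (rel : GPath G → GPath G → Prop)
    (v : G.V) (E₁ : Set G.E)
    (p q : GPath (InsplitGraph G v E₁)) : Prop :=
  p.src = q.src ∧ p.rng = q.rng ∧
  ∃ p' q' : GPath G,
    p'.src = parV G v p.src ∧ p'.edges = p.edges.map (parE G v) ∧
    q'.src = parV G v q.src ∧ q'.edges = q.edges.map (parE G v) ∧
    rel p' q'

section Paths

variable {G : ColoredGraph k}

theorem GPath.ext {p q : GPath G} (hs : p.src = q.src) (he : p.edges = q.edges) : p = q := by
  cases p; cases q; cases hs; cases he; rfl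

theorem GPath.length_colors (p : GPath G) : p.colors.length = p.edges.length :=
  List.length_map _

theorem GPath.rng_append (p q : GPath G) (h : p.rng = q.src) : (p.append q h).rng = q.rng := by
  show G.endV p.src (p.edges ++ q.edges) = q.rng
  rw [endV_append, show G.endV p.src p.edges = q.src from h]
  rfl

theorem GPath.colors_append (p q : GPath G) (h : p.rng = q.src) :
    (p.append q h).colors = p.colors ++ q.colors :=
  List.map_append ..

theorem composable_append_iff :
    ∀ (l₁ : List G.E) (v : G.V) (l₂ : List G.E),
      G.Composable v (l₁ ++ l₂) ↔ G.Composable v l₁ ∧ G.Composable (G.endV v l₁) l₂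
  | [], _, _ => by simp [Composable, endV]
  | e :: l, _, l₂ => by
    simp only [List.cons_append, Composable, endV, composable_append_iff l, and_assoc]

theorem GPath.exists_eq_append_of_colors_eq_append {q : GPath G} {c₁ c₂ : List (Fin k)}
    (h : q.colors = c₁ ++ c₂) :
    ∃ (q₁ q₂ : GPath G) (h' : q₁.rng = q₂.src),
      q = q₁.append q₂ h' ∧ q₁.colors = c₁ ∧ q₂.colors = c₂ := by
  obtain ⟨l₁, l₂, hl, hc₁, hc₂⟩ := List.map_eq_append_iff.mp h
  have hcomp := (composable_append_iff l₁ q.src l₂).mp (hl ▸ q.comp)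
  exact ⟨⟨q.src, l₁, hcomp.1⟩, ⟨_, l₂, hcomp.2⟩, rfl, GPath.ext rfl hl,
    hc₁, hc₂⟩

end Paths

section KGraph

variable {G : ColoredGraph k} {rel : GPath G → GPath G → Prop}

theorem IsKGraphRel.colors_perm (hK : IsKGraphRel G rel) {p q : GPath G} (h : rel p q) :
    p.colors.Perm q.colors :=
  List.perm_iff_count.2 fun i => congrFun (hK.2.1 p q h).2.2 i

theorem IsKGraphRel.eq_of_rel_of_colors_eq (hK : IsKGraphRel G rel) {p q r : GPath G}
    (hp : rel p r) (hq : rel q r) (hc : p.colors = q.colors) : p = q := by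
  obtain ⟨_, _, huniq⟩ := hK.2.2.2 r p.colors (hK.colors_perm hp)
  exact (huniq p ⟨hp, rfl⟩).trans (huniq q ⟨hq, hc.symm⟩).symm

theorem IsKGraphRel.exists_rel_colors_eq {α : Type*} (hK : IsKGraphRel G rel)
    (F : GPath G → α) (hF : KG0 G fun p q => F p = F q)
    (hsq : ∀ p q, rel p q → p.edges.length = 2 → q.edges.length = 2 → F p = F q)
    {c c' : List (Fin k)} (hc : c.Perm c') :
    ∀ q : GPath G, q.colors = c' →
      ∃ q₀, rel q₀ q ∧ q₀.colors = c ∧ F q₀ = F q := by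
  induction hc with
  | nil => exact fun q hq => ⟨q, hK.1.refl q, hq, rfl⟩
  | cons x _ ih =>
    intro q hq
    obtain ⟨q₁, q₂, h, rfl, hc₁, hc₂⟩ :=
      GPath.exists_eq_append_of_colors_eq_append (c₁ := [x]) hq
    obtain ⟨r, hr, hrc, hrF⟩ := ih q₂ hc₂
    have h' : q₁.rng = r.src := h.trans (hK.2.1 r q₂ hr).1.symm
    refine ⟨q₁.append r h', hK.2.2.1 _ _ _ _ h' h (hK.1.refl q₁) hr, ?_,
      hF _ _ _ _ h' h rfl hrF⟩
    rw [GPath.colors_append, hc₁, hrc]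
    rfl
  | swap x y l =>
    intro q hq
    obtain ⟨q₁, q₂, h, rfl, hc₁, hc₂⟩ :=
      GPath.exists_eq_append_of_colors_eq_append (c₁ := [x, y]) hq
    obtain ⟨t, ⟨ht, htc⟩, -⟩ := hK.2.2.2 q₁ [y, x] (hc₁ ▸ List.Perm.swap x y [])
    have h' : t.rng = q₂.src := (hK.2.1 t q₁ ht).2.1.trans h
    have htq₁ : F t = F q₁ := hsq t q₁ ht
      (by rw [← t.length_colors, htc]; rfl) (by rw [← q₁.length_colors, hc₁]; rfl)
    refine ⟨t.append q₂ h', hK.2.2.1 _ _ _ _ h' h ht (hK.1.refl q₂), ?_,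
      hF _ _ _ _ h' h htq₁ rfl⟩
    rw [GPath.colors_append, htc, hc₂]
    rfl
  | trans _ _ ih₁ ih₂ =>
    intro q hq
    obtain ⟨q₂, hr₂, hc₂, hF₂⟩ := ih₂ q hq
    obtain ⟨q₁, hr₁, hc₁, hF₁⟩ := ih₁ q₂ hc₂
    exact ⟨q₁, hK.1.trans hr₁ hr₂, hc₁, hF₁.trans hF₂⟩

theorem IsKGraphRel.apply_eq_of_rel {α : Type*} (hK : IsKGraphRel G rel)
    (F : GPath G → α) (hF : KG0 G fun p q => F p = F q)
    (hsq : ∀ p q, rel p q → p.edges.length = 2 → q.edges.length = 2 → F p = F q)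
    {p q : GPath G} (h : rel p q) : F p = F q := by
  obtain ⟨q₀, hq₀, hc, hF₀⟩ := hK.exists_rel_colors_eq F hF hsq (hK.colors_perm h) q rfl
  rw [hK.eq_of_rel_of_colors_eq h hq₀ hc.symm, hF₀]

/-- In the paper's right-to-left notation: `a g ∼ f b` for some edges `g`, `b`. -/
def Paired (rel : GPath G → GPath G → Prop) (a f : G.E) : Prop :=
  ∃ (g b : G.E) (p q : GPath G), p.edges = [g, a] ∧ q.edges = [b, f] ∧ rel p q

theorem IsKGraphRel.rng_eq_of_paired (hK : IsKGraphRel G rel) {a f : G.E}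
    (h : Paired rel a f) : G.rng a = G.rng f := by
  obtain ⟨g, b, p, q, hp, hq, hr⟩ := h
  simpa [GPath.rng, hp, hq, endV] using (hK.2.1 p q hr).2.1

theorem IsKGraphRel.exists_paired_color (hK : IsKGraphRel G rel) (hsf : SourceFree G)
    (a : G.E) (i : Fin k) : ∃ f, Paired rel a f ∧ G.color f = i := by
  obtain ⟨g, hg, hgi⟩ := hsf (G.src a) i
  let p := (edgePath G g).append (edgePath G a) hg
  have hpc : p.colors = [i, G.color a] := by simp [p, GPath.append, edgePath, GPath.colors, hgi]
  obtain ⟨q, ⟨hq, hqc⟩, -⟩ := hK.2.2.2 p [G.color a, i] (hpc ▸ List.Perm.swap _ _ [])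
  obtain ⟨b, f, hbf⟩ := List.length_eq_two.mp (by rw [← q.length_colors, hqc]; rfl)
  refine ⟨f, ⟨g, b, p, q, rfl, hbf, hK.1.symm hq⟩, ?_⟩
  simp only [GPath.colors, hbf, List.map_cons, List.map_nil, List.cons.injEq] at hqc
  exact hqc.2.1

end KGraph

section Insplit

variable {G : ColoredGraph k} {v : G.V} {E₁ : Set G.E}

noncomputable def insplitRng (G : ColoredGraph k) (v : G.V) (E₁ : Set G.E) (e : G.E) : IV G v :=
  if h : G.rng e = v then (if e ∈ E₁ then Sum.inr true else Sum.inr false)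
  else Sum.inl ⟨G.rng e, h⟩

noncomputable def insplitEnd (G : ColoredGraph k) (v : G.V) (E₁ : Set G.E) (l : List G.E)
    (w : IV G v) : IV G v :=
  l.foldl (fun _ e => insplitRng G v E₁ e) w

theorem insplitEnd_append (l₁ l₂ : List G.E) :
    insplitEnd G v E₁ (l₁ ++ l₂) = insplitEnd G v E₁ l₂ ∘ insplitEnd G v E₁ l₁ :=
  funext fun _ => List.foldl_append

theorem parV_insplitRng (e : G.E) : parV G v (insplitRng G v E₁ e) = G.rng e := by
  unfold insplitRng
  split_ifs with h <;> simp only [parV, h]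

theorem insplitRng_eq_of_rng_eq {a f : G.E} (hr : G.rng a = G.rng f)
    (hE : G.rng a = v → (a ∈ E₁ ↔ f ∈ E₁)) :
    insplitRng G v E₁ a = insplitRng G v E₁ f := by
  unfold insplitRng
  by_cases hv : G.rng a = v
  · simp only [hv, ← hr, (hE hv)]
  · simp only [hv, ← hr, dite_false]

theorem insplit_rng (ε : IE G v) :
    (InsplitGraph G v E₁).rng ε = insplitRng G v E₁ (parE G v ε) := by
  rcases ε with e | ⟨e, b⟩ <;> rfl

theorem insplit_color (ε : IE G v) : (InsplitGraph G v E₁).color ε = G.color (parE G v ε) := by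
  rcases ε with e | ⟨e, b⟩ <;> rfl

theorem parV_insplit_rng (ε : IE G v) :
    parV G v ((InsplitGraph G v E₁).rng ε) = G.rng (parE G v ε) := by
  rw [insplit_rng, parV_insplitRng]

theorem src_parE (ε : IE G v) :
    G.src (parE G v ε) = parV G v ((InsplitGraph G v E₁).src ε) := by
  rcases ε with e | ⟨e, b⟩
  · rfl
  · exact e.2

theorem parE_surjective : Function.Surjective (parE G v) := fun e => by
  by_cases hs : G.src e = v
  · exact ⟨Sum.inr (⟨e, hs⟩, true), rfl⟩
  · exact ⟨Sum.inl ⟨e, hs⟩, rfl⟩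

theorem composable_map_parE : ∀ (m : List (IE G v)) (w : IV G v),
    (InsplitGraph G v E₁).Composable w m → G.Composable (parV G v w) (m.map (parE G v))
  | [], _, _ => trivial
  | ε :: m, _, h =>
    ⟨(src_parE ε).trans (congrArg _ h.1),
      parV_insplit_rng ε ▸ composable_map_parE m _ h.2⟩

theorem parV_endV : ∀ (m : List (IE G v)) (w : IV G v),
    parV G v ((InsplitGraph G v E₁).endV w m) = G.endV (parV G v w) (m.map (parE G v))
  | [], _ => rfl
  | ε :: m, _ => (parV_endV m _).trans (congrArg (G.endV · _) (parV_insplit_rng ε))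

theorem endV_insplit : ∀ (m : List (IE G v)) (w : IV G v),
    (InsplitGraph G v E₁).endV w m = insplitEnd G v E₁ (m.map (parE G v)) w
  | [], _ => rfl
  | ε :: m, _ => (endV_insplit m _).trans (by rw [insplit_rng]; rfl)

def parPath (p : GPath (InsplitGraph G v E₁)) : GPath G :=
  ⟨parV G v p.src, p.edges.map (parE G v), composable_map_parE p.edges p.src p.comp⟩

theorem parPath_rng (p : GPath (InsplitGraph G v E₁)) : (parPath p).rng = parV G v p.rng :=
  (parV_endV p.edges p.src).symm

theorem rng_eq_insplitEnd (p : GPath (InsplitGraph G v E₁)) :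
    p.rng = insplitEnd G v E₁ (parPath p).edges p.src :=
  endV_insplit p.edges p.src

theorem parPath_colors (p : GPath (InsplitGraph G v E₁)) : (parPath p).colors = p.colors :=
  (List.map_map ..).trans (List.map_congr_left fun ε _ => (insplit_color (E₁ := E₁) ε).symm)

theorem parPath_deg (p : GPath (InsplitGraph G v E₁)) : (parPath p).deg = p.deg :=
  congrArg (fun c i => c.count i) (parPath_colors p)

theorem parPath_append (p q : GPath (InsplitGraph G v E₁)) (h : p.rng = q.src) :
    parPath (p.append q h) =
      (parPath p).append (parPath q) (by rw [parPath_rng, h]; rfl) :=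
  GPath.ext rfl (List.map_append ..)

theorem insplitRel_iff {rel : GPath G → GPath G → Prop} {p q : GPath (InsplitGraph G v E₁)} :
    InsplitRel G rel v E₁ p q ↔
      p.src = q.src ∧ p.rng = q.rng ∧ rel (parPath p) (parPath q) := by
  constructor
  · rintro ⟨hs, hr, p', q', hp₁, hp₂, hq₁, hq₂, hrel⟩
    obtain rfl : p' = parPath p := GPath.ext hp₁ hp₂
    obtain rfl : q' = parPath q := GPath.ext hq₁ hq₂
    exact ⟨hs, hr, hrel⟩
  · rintro ⟨hs, hr, hrel⟩
    exact ⟨hs, hr, parPath p, parPath q, rfl, rfl, rfl, rfl, hrel⟩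

theorem exists_insplit_lift_edge (w : IV G v) (e : G.E) (h : G.src e = parV G v w) :
    ∃ ε : IE G v, (InsplitGraph G v E₁).src ε = w ∧ parE G v ε = e := by
  rcases w with w | b
  · exact ⟨Sum.inl ⟨e, fun he => w.2 (h.symm.trans he)⟩,
      congrArg Sum.inl (Subtype.ext h), rfl⟩
  · exact ⟨Sum.inr (⟨e, h⟩, b), rfl, rfl⟩

theorem exists_insplit_lift_list : ∀ (l : List G.E) (w : IV G v),
    G.Composable (parV G v w) l →
      ∃ m, (InsplitGraph G v E₁).Composable w m ∧ m.map (parE G v) = l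
  | [], _, _ => ⟨[], trivial, rfl⟩
  | e :: l, w, h => by
    obtain ⟨ε, hs, rfl⟩ := exists_insplit_lift_edge (E₁ := E₁) w e h.1
    obtain ⟨m, hm, hml⟩ := exists_insplit_lift_list l ((InsplitGraph G v E₁).rng ε)
      (parV_insplit_rng ε ▸ h.2)
    exact ⟨ε :: m, ⟨hs, hm⟩, congrArg (parE G v ε :: ·) hml⟩

theorem exists_parPath_eq (q : GPath G) (w : IV G v) (h : q.src = parV G v w) :
    ∃ p : GPath (InsplitGraph G v E₁), p.src = w ∧ parPath p = q := by
  obtain ⟨m, hm, hml⟩ := exists_insplit_lift_list (E₁ := E₁) q.edges w (h ▸ q.comp)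
  exact ⟨⟨w, m, hm⟩, rfl, GPath.ext h.symm hml⟩

theorem insplit_edge_eq {ε ε' : IE G v}
    (hs : (InsplitGraph G v E₁).src ε = (InsplitGraph G v E₁).src ε')
    (he : parE G v ε = parE G v ε') : ε = ε' := by
  rcases ε with ⟨e, _⟩ | ⟨⟨e, _⟩, b⟩ <;>
    rcases ε' with ⟨e', _⟩ | ⟨⟨e', _⟩, b'⟩ <;>
    simp_all [InsplitGraph, parE]

theorem insplit_edges_eq : ∀ {m m' : List (IE G v)} {w : IV G v},
    (InsplitGraph G v E₁).Composable w m → (InsplitGraph G v E₁).Composable w m' →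
      m.map (parE G v) = m'.map (parE G v) → m = m'
  | [], [], _, _, _, _ => rfl
  | ε :: m, ε' :: m', _, hm, hm', h => by
    simp only [List.map_cons, List.cons.injEq] at h
    obtain rfl := insplit_edge_eq (hm.1.trans hm'.1.symm) h.1
    exact congrArg _ (insplit_edges_eq hm.2 hm'.2 h.2)

theorem GPath.eq_of_parPath_eq {p q : GPath (InsplitGraph G v E₁)} (hs : p.src = q.src)
    (h : parPath p = parPath q) : p = q :=
  GPath.ext hs (insplit_edges_eq p.comp (hs ▸ q.comp) (congrArg GPath.edges h))

end Insplit

section InsplitKGraph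

variable {G : ColoredGraph k} {rel : GPath G → GPath G → Prop} {v : G.V} {E₁ : Set G.E}

def PairingCondition (rel : GPath G → GPath G → Prop) (v : G.V) (E₁ : Set G.E) : Prop :=
  ∀ a f : G.E, G.rng a = v → Paired rel a f → (a ∈ E₁ ↔ f ∈ E₁)

theorem insplitRng_eq_of_paired (hK : IsKGraphRel G rel) (hpair : PairingCondition rel v E₁)
    {a f : G.E} (h : Paired rel a f) : insplitRng G v E₁ a = insplitRng G v E₁ f :=
  insplitRng_eq_of_rng_eq (hK.rng_eq_of_paired h) fun ha => hpair a f ha h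

theorem insplitEnd_eq_of_rel (hK : IsKGraphRel G rel) (hpair : PairingCondition rel v E₁)
    {p q : GPath G} (h : rel p q) : insplitEnd G v E₁ p.edges = insplitEnd G v E₁ q.edges := by
  refine hK.apply_eq_of_rel (fun p => insplitEnd G v E₁ p.edges) ?_ ?_ h
  · intro p₁ p₂ q₁ q₂ _ _ h₁ h₂
    simp only [GPath.append, insplitEnd_append, h₁, h₂]
  · intro p q hpq hp hq
    obtain ⟨g, a, hga⟩ := List.length_eq_two.mp hp
    obtain ⟨b, f, hbf⟩ := List.length_eq_two.mp hq
    simp only [hga, hbf]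
    exact funext fun _ => insplitRng_eq_of_paired hK hpair ⟨g, b, p, q, hga, hbf, hpq⟩

theorem equivalence_insplitRel (h : Equivalence rel) :
    Equivalence (InsplitRel G rel v E₁) where
  refl _ := insplitRel_iff.2 ⟨rfl, rfl, h.refl _⟩
  symm hpq :=
    have ⟨hs, hr, hrel⟩ := insplitRel_iff.1 hpq
    insplitRel_iff.2 ⟨hs.symm, hr.symm, h.symm hrel⟩
  trans hpq hqr :=
    have ⟨hs, hr, hrel⟩ := insplitRel_iff.1 hpq
    have ⟨hs', hr', hrel'⟩ := insplitRel_iff.1 hqr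
    insplitRel_iff.2 ⟨hs.trans hs', hr.trans hr', h.trans hrel hrel'⟩

theorem preservesRSD_insplitRel (h : PreservesRSD G rel) :
    PreservesRSD (InsplitGraph G v E₁) (InsplitRel G rel v E₁) := by
  intro p q hpq
  obtain ⟨hs, hr, hrel⟩ := insplitRel_iff.1 hpq
  exact ⟨hs, hr, (parPath_deg p).symm.trans ((h _ _ hrel).2.2.trans (parPath_deg q))⟩

theorem kg0_insplitRel (h : KG0 G rel) : KG0 (InsplitGraph G v E₁) (InsplitRel G rel v E₁) := by
  intro p₁ p₂ q₁ q₂ hp hq h₁ h₂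
  rw [insplitRel_iff] at h₁ h₂ ⊢
  refine ⟨h₁.1, by rw [GPath.rng_append, GPath.rng_append, h₂.2.1], ?_⟩
  rw [parPath_append, parPath_append]
  exact h _ _ _ _ _ _ h₁.2.2 h₂.2.2

theorem kg4_insplitRel (hK : IsKGraphRel G rel) (hpair : PairingCondition rel v E₁) :
    KG4 (InsplitGraph G v E₁) (InsplitRel G rel v E₁) := by
  intro p c hc
  obtain ⟨q, ⟨hq, hqc⟩, huniq⟩ := hK.2.2.2 (parPath p) c (by rwa [parPath_colors])
  obtain ⟨P, hPs, hPq⟩ := exists_parPath_eq (E₁ := E₁) q p.src (hK.2.1 q _ hq).1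
  refine ⟨P, ⟨insplitRel_iff.2 ⟨hPs, ?_, hPq ▸ hq⟩, ?_⟩, ?_⟩
  · rw [rng_eq_insplitEnd, rng_eq_insplitEnd, hPq, hPs, insplitEnd_eq_of_rel hK hpair hq]
  · rw [← parPath_colors, hPq, hqc]
  · rintro R ⟨hR, hRc⟩
    obtain ⟨hRs, -, hRrel⟩ := insplitRel_iff.1 hR
    refine GPath.eq_of_parPath_eq (hRs.trans hPs.symm) ?_
    rw [hPq]
    exact huniq _ ⟨hRrel, by rwa [parPath_colors]⟩

theorem exists_insplitRng_eq_of_color (hK : IsKGraphRel G rel) (hsf : SourceFree G)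
    (hpair : PairingCondition rel v E₁) (h₁ : ∃ a ∈ E₁, G.rng a = v)
    (h₂ : ∃ a ∉ E₁, G.rng a = v) (w : IV G v) (i : Fin k) :
    ∃ e, insplitRng G v E₁ e = w ∧ G.color e = i := by
  rcases w with u | b
  · obtain ⟨e, he, hei⟩ := hsf u.1 i
    exact ⟨e, by simp [insplitRng, he, u.2], hei⟩
  · obtain ⟨a, ha⟩ : ∃ a, insplitRng G v E₁ a = Sum.inr b := by
      cases b
      · obtain ⟨a, ha, hav⟩ := h₂
        exact ⟨a, by simp [insplitRng, hav, ha]⟩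
      · obtain ⟨a, ha, hav⟩ := h₁
        exact ⟨a, by simp [insplitRng, hav, ha]⟩
    obtain ⟨f, hf, hfi⟩ := hK.exists_paired_color hsf a i
    exact ⟨f, (insplitRng_eq_of_paired hK hpair hf).symm.trans ha, hfi⟩

theorem sourceFree_insplitGraph (hK : IsKGraphRel G rel) (hsf : SourceFree G)
    (hpair : PairingCondition rel v E₁) (h₁ : ∃ a ∈ E₁, G.rng a = v)
    (h₂ : ∃ a ∉ E₁, G.rng a = v) : SourceFree (InsplitGraph G v E₁) := by
  intro w i
  obtain ⟨e, he, hei⟩ := exists_insplitRng_eq_of_color hK hsf hpair h₁ h₂ w i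
  obtain ⟨ε, rfl⟩ := parE_surjective (G := G) (v := v) e
  exact ⟨ε, (insplit_rng ε).trans he, (insplit_color ε).trans hei⟩

end InsplitKGraph

theorem insplit_is_kgraph_general {k : ℕ} (G : ColoredGraph k) (rel : GPath G → GPath G → Prop)
    (hK : IsKGraphRel G rel) (hsf : SourceFree G)
    (v : G.V) (E₁ E₂ : Set G.E)
    (hsub₁ : ∀ e ∈ E₁, G.rng e = v) (hsub₂ : ∀ e ∈ E₂, G.rng e = v)
    (hdisj : ∀ e : G.E, ¬(e ∈ E₁ ∧ e ∈ E₂))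
    (hne₁ : E₁.Nonempty) (hne₂ : E₂.Nonempty)
    (hpair : ∀ a fe : G.E, G.rng a = v → G.rng fe = v →
      (∃ (g b : G.E) (p q : GPath G), p.edges = [g, a] ∧ q.edges = [b, fe] ∧ rel p q) →
      ((a ∈ E₁ ↔ fe ∈ E₁) ∧ (a ∈ E₂ ↔ fe ∈ E₂))) :
    IsKGraphRel (InsplitGraph G v E₁) (InsplitRel G rel v E₁) ∧
      SourceFree (InsplitGraph G v E₁) := by
  have hpair₁ : PairingCondition rel v E₁ := fun a f ha h =>
    (hpair a f ha ((hK.rng_eq_of_paired h).symm.trans ha) h).1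
  obtain ⟨a₁, ha₁⟩ := hne₁
  obtain ⟨a₂, ha₂⟩ := hne₂
  exact ⟨⟨equivalence_insplitRel hK.1, preservesRSD_insplitRel hK.2.1, kg0_insplitRel hK.2.2.1,
      kg4_insplitRel hK hpair₁⟩,
    sourceFree_insplitGraph hK hsf hpair₁ ⟨a₁, ha₁, hsub₁ a₁ ha₁⟩
      ⟨a₂, fun h => hdisj a₂ ⟨h, ha₂⟩, hsub₂ a₂ ha₂⟩⟩

/-- In-splitting a source-free `k`-graph at `v` along a partition `E₁ ∪ E₂` of
`r⁻¹(v)` satisfying the pairing condition yields a source-free `k`-graph. -/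
theorem insplit_is_kgraph {k : ℕ} (G : ColoredGraph k) (rel : GPath G → GPath G → Prop)
    (hK : IsKGraphRel G rel) (hsf : SourceFree G)
    (v : G.V) (E₁ E₂ : Set G.E)
    (hsub₁ : ∀ e ∈ E₁, G.rng e = v) (hsub₂ : ∀ e ∈ E₂, G.rng e = v)
    (hcov : ∀ e : G.E, G.rng e = v → e ∈ E₁ ∪ E₂)
    (hdisj : ∀ e : G.E, ¬(e ∈ E₁ ∧ e ∈ E₂))
    (hne₁ : E₁.Nonempty) (hne₂ : E₂.Nonempty)
    (hpair : ∀ a fe : G.E, G.rng a = v → G.rng fe = v →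
      (∃ (g b : G.E) (p q : GPath G), p.edges = [g, a] ∧ q.edges = [b, fe] ∧ rel p q) →
      ((a ∈ E₁ ↔ fe ∈ E₁) ∧ (a ∈ E₂ ↔ fe ∈ E₂))) :
    IsKGraphRel (InsplitGraph G v E₁) (InsplitRel G rel v E₁) ∧
      SourceFree (InsplitGraph G v E₁) :=
  insplit_is_kgraph_general G rel hK hsf v E₁ E₂ hsub₁ hsub₂ hdisj hne₁ hne₂ hpair

end ColoredGraph
end

section
/- Let (Λ, d) be a k-graph with v ∈ Λ⁰ an e_i sink (no edge of degree e_i has source v). Then every vertex w with w ≤ v (i.e., there is a path λ ∈ G* with s(λ) = v, r(λ) = w) is also an e_i sink. -/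
open scoped Classical

namespace ColoredGraph

variable {k : ℕ}

/-- If `v` is an `e_i` sink (it emits no edge of color `i`), then every vertex
`w ≤ v` (i.e. reachable by a path with source `v` and range `w`) is also an
`e_i` sink. -/
theorem sink_hereditary {k : ℕ} (G : ColoredGraph k) (rel : GPath G → GPath G → Prop)
    (hK : IsKGraphRel G rel) (i : Fin k) (v : G.V)
    (hsink : ∀ e : G.E, G.src e = v → G.color e ≠ i) :
    ∀ w : G.V, LeV G v w → ∀ e : G.E, G.src e = w → G.color e ≠ i := by
  intro w hle e hse hce
  obtain ⟨p, hs, hr⟩ := hle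
  obtain ⟨_, hRSD, _, hKG4⟩ := hK
  have hre : p.rng = (edgePath G e).src := by
    simpa [edgePath] using hr.trans hse.symm
  set P := p.append (edgePath G e) hre with hP
  have hPcolors : P.colors = p.colors ++ [i] := by
    simp [hP, GPath.append, GPath.colors, edgePath, hce]
  have hperm : List.Perm (i :: p.colors) P.colors := by
    rw [hPcolors]
    simpa using (List.perm_append_comm (l₁ := [i]) (l₂ := p.colors))
  obtain ⟨q, ⟨hrel, hqc⟩, -⟩ := hKG4 P (i :: p.colors) hperm
  have hqsrc : q.src = v := by
    have := (hRSD q P hrel).1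
    rw [this]
    simpa [hP, GPath.append] using hs
  cases hq : q.edges with
  | nil => simp [GPath.colors, hq] at hqc
  | cons f l =>
    have hfc : G.color f = i := by
      have := hqc
      rw [GPath.colors, hq] at this
      simpa using congrArg List.head? this
    have hcomp := q.comp
    rw [hq] at hcomp
    exact hsink f (hcomp.1.trans hqsrc) hfc

end ColoredGraph
end
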